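/- The generalized weak Galerkin scheme for the Stokes equations has a unique solution (u_h, p_h) ∈ V_h⁰ × W_h: if (u_h, p_h) solves the scheme with f = 0, then u_h ≡ 0 and p_h ≡ 0. -/
import Mathlib


/-- Theorem 3.1: the generalized weak Galerkin scheme for the Stokes
equations has a unique solution; equivalently, if `(u_h, p_h)` solves the scheme
with `f = 0` then `u_h = 0` and `p_h = 0`.
`aA` is the `A`-weighted gradient form, `s1`, `s2` the two stabilizers (all
nonnegative on the diagonal), `b(v,q) = (∇_w·v, q)`; `hnorm` is the energy-norm
property (Lemma 3.1) and `hinfsup` the inf-sup condition (Lemma 3.2) in the form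
used in the uniqueness proof. -/
theorem weak_galerkin_stokes_unique_solution
    {V P G : Type*} [AddCommGroup V] [Module ℝ V]
    [AddCommGroup P] [Module ℝ P] [AddCommGroup G] [Module ℝ G]
    (gradw : V →ₗ[ℝ] G)
    (aA : G →ₗ[ℝ] G →ₗ[ℝ] ℝ) (s1 : V →ₗ[ℝ] V →ₗ[ℝ] ℝ)
    (b : V →ₗ[ℝ] P →ₗ[ℝ] ℝ) (s2 : P →ₗ[ℝ] P →ₗ[ℝ] ℝ)
    (haA : ∀ g : G, 0 ≤ aA g g)
    (hs1 : ∀ v : V, 0 ≤ s1 v v)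
    (hs2 : ∀ q : P, 0 ≤ s2 q q)
    -- Lemma 3.1: the energy seminorm is a norm on V_h⁰
    (hnorm : ∀ v : V, aA (gradw v) (gradw v) = 0 → s1 v v = 0 → v = 0)
    -- Lemma 3.2 (inf-sup), as used in the uniqueness argument
    (hinfsup : ∀ q : P, s2 q q = 0 → (∀ v : V, b v q = 0) → q = 0)
    (u : V) (p : P)
    -- the scheme with homogeneous data f = 0
    (heq1 : ∀ v : V, aA (gradw u) (gradw v) - b v p + s1 u v = 0)
    (heq2 : ∀ q : P, b u q + s2 p q = 0) :
    u = 0 ∧ p = 0 := by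
  have h1 := heq1 u
  have h2 := heq2 p
  -- aA + s1 + s2 = 0
  have hsum : aA (gradw u) (gradw u) + s1 u u + s2 p p = 0 := by linarith
  have ha0 : aA (gradw u) (gradw u) = 0 := by
    have := haA (gradw u); have := hs1 u; have := hs2 p; linarith
  have hs10 : s1 u u = 0 := by
    have := haA (gradw u); have := hs1 u; have := hs2 p; linarith
  have hs20 : s2 p p = 0 := by
    have := haA (gradw u); have := hs1 u; have := hs2 p; linarith
  have hu : u = 0 := hnorm u ha0 hs10
  have hp : p = 0 := by
    apply hinfsup p hs20
    intro v
    have := heq1 v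
    rw [hu] at this
    simp at this
    linarith
  exact ⟨hu, hp⟩
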